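/- arXiv:2207.03669 — 4 statements merged into one kernel-verified Lean document; each statement's English description precedes it below -/
import Mathlib

section
/- If there is a generalized action emulation between action models A and B (satisfying Zig, Zag, Zig0, Zag0), then for every Kripke model M, the updated models M ⊗ A and M ⊗ B are bisimilar; that is, A and B are equivalent action models. -/
/-- Modal formulas over label set `A` and proposition set `P`. -/
inductive Form (A P : Type) : Type
  | top : Form A P
  | atom : P → Form A P
  | neg : Form A P → Form A P
  | or : Form A P → Form A P → Form A P
  | dia : A → Form A P → Form A P

namespace Form
variable {A P : Type}
def and (φ ψ : Form A P) : Form A P := Form.neg ((Form.neg φ).or (Form.neg ψ))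
def box (a : A) (φ : Form A P) : Form A P := Form.neg (Form.dia a (Form.neg φ))
def bot : Form A P := Form.neg Form.top
def imp (φ ψ : Form A P) : Form A P := (Form.neg φ).or ψ
end Form

/-- Kripke models. -/
structure Kripke (A P : Type) : Type 1 where
  W : Type
  val : W → P → Prop
  rel : A → W → W → Prop
  actual : Set W

variable {A P : Type}

/-- Satisfaction of a modal formula at a world. -/
def sat (M : Kripke A P) : M.W → Form A P → Prop
  | _, .top => True
  | w, .atom p => M.val w p
  | w, .neg φ => ¬ sat M w φ
  | w, .or φ ψ => sat M w φ ∨ sat M w ψ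
  | w, .dia a φ => ∃ v, M.rel a w v ∧ sat M v φ

/-- Semantic entailment over all Kripke models. -/
def entails (φ ψ : Form A P) : Prop := ∀ (M : Kripke A P) (w : M.W), sat M w φ → sat M w ψ

/-- Semantic equivalence. -/
def equivF (φ ψ : Form A P) : Prop := entails φ ψ ∧ entails ψ φ

def satisfiable (φ : Form A P) : Prop := ∃ (M : Kripke A P) (w : M.W), sat M w φ

def valid (φ : Form A P) : Prop := ∀ (M : Kripke A P) (w : M.W), sat M w φ

/-- Finite disjunction (empty disjunction is `⊥`). -/
def bigOr : List (Form A P) → Form A P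
  | [] => Form.bot
  | φ :: l => φ.or (bigOr l)

/-- Finite conjunction (empty conjunction is `⊤`). -/
def bigAnd : List (Form A P) → Form A P
  | [] => Form.top
  | φ :: l => φ.and (bigAnd l)

/-- `⋀_{a ∈ A} □_a (ξ a)` for a finite label set `A`. -/
noncomputable def boxConj [Fintype A] (ξ : A → Form A P) : Form A P :=
  bigAnd ((Finset.univ : Finset A).toList.map fun a => Form.box a (ξ a))

/-- `R` is a bisimulation between Kripke models `M` and `N`. -/
def IsBisim (M N : Kripke A P) (R : M.W → N.W → Prop) : Prop :=
  ∀ w v, R w v →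
    ((∀ p, M.val w p ↔ N.val v p) ∧
     (∀ a w', M.rel a w w' → ∃ v', N.rel a v v' ∧ R w' v') ∧
     (∀ a v', N.rel a v v' → ∃ w', M.rel a w w' ∧ R w' v'))

/-- Pointed bisimilarity of Kripke models (Zig0/Zag0 on actual worlds). -/
def Bisimilar (M N : Kripke A P) : Prop :=
  ∃ R, IsBisim M N R ∧ (∀ w ∈ M.actual, ∃ v ∈ N.actual, R w v) ∧
       (∀ v ∈ N.actual, ∃ w ∈ M.actual, R w v)

/-- Action models. -/
structure ActionModel (A P : Type) : Type 1 where
  E : Type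
  pre : E → Form A P
  rel : A → E → E → Prop
  actual : Set E

/-- The update product `M ⊗ 𝔄`. -/
def update (M : Kripke A P) (𝔄 : ActionModel A P) : Kripke A P where
  W := {p : M.W × 𝔄.E // sat M p.1 (𝔄.pre p.2)}
  val w p := M.val w.1.1 p
  rel a w v := M.rel a w.1.1 v.1.1 ∧ 𝔄.rel a w.1.2 v.1.2
  actual := {w | w.1.1 ∈ M.actual ∧ w.1.2 ∈ 𝔄.actual}

/-- Action model equivalence: same updating effect (up to bisimilarity) on every Kripke model. -/
def AMEquiv (𝔄 𝔅 : ActionModel A P) : Prop :=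
  ∀ M : Kripke A P, Bisimilar (update M 𝔄) (update M 𝔅)

/-- `S` is an action bisimulation between action models `𝔄` and `𝔅`. -/
def IsActBisim (𝔄 𝔅 : ActionModel A P) (S : 𝔄.E → 𝔅.E → Prop) : Prop :=
  ∀ x y, S x y →
    (equivF (𝔄.pre x) (𝔅.pre y) ∧
     (∀ a x', 𝔄.rel a x x' → satisfiable ((𝔄.pre x).and (Form.dia a (𝔄.pre x'))) →
        ∃ y', 𝔅.rel a y y' ∧ S x' y') ∧
     (∀ a y', 𝔅.rel a y y' → satisfiable ((𝔅.pre y).and (Form.dia a (𝔅.pre y'))) →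
        ∃ x', 𝔄.rel a x x' ∧ S x' y'))

/-- Action bisimilarity of action models (with Zig0/Zag0 on actual events). -/
def ActBisimilar (𝔄 𝔅 : ActionModel A P) : Prop :=
  ∃ S, IsActBisim 𝔄 𝔅 S ∧ (∀ x ∈ 𝔄.actual, ∃ y ∈ 𝔅.actual, S x y) ∧
       (∀ y ∈ 𝔅.actual, ∃ x ∈ 𝔄.actual, S x y)

/-- Zig of the generalized action emulation:
`η(x,y) ⊨ □_a (Pre^𝔄(x') → ⋁_{y →_a y'} (Pre^𝔅(y') ∧ η(x',y')))`, rendered semantically. -/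
def GAEZig (𝔄 𝔅 : ActionModel A P) (η : 𝔄.E → 𝔅.E → Form A P) : Prop :=
  ∀ (a : A) (x : 𝔄.E) (y : 𝔅.E) (x' : 𝔄.E), 𝔄.rel a x x' →
    ∀ (M : Kripke A P) (w v : M.W), sat M w (η x y) → M.rel a w v → sat M v (𝔄.pre x') →
      ∃ y', 𝔅.rel a y y' ∧ sat M v (𝔅.pre y') ∧ sat M v (η x' y')

/-- Zag of the generalized action emulation. -/
def GAEZag (𝔄 𝔅 : ActionModel A P) (η : 𝔄.E → 𝔅.E → Form A P) : Prop :=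
  ∀ (a : A) (x : 𝔄.E) (y : 𝔅.E) (y' : 𝔅.E), 𝔅.rel a y y' →
    ∀ (M : Kripke A P) (w v : M.W), sat M w (η x y) → M.rel a w v → sat M v (𝔅.pre y') →
      ∃ x', 𝔄.rel a x x' ∧ sat M v (𝔄.pre x') ∧ sat M v (η x' y')

/-- Zig0 of the generalized action emulation:
`Pre^𝔄(x) ⊨ ⋁_{y ∈ E₀^𝔅} (Pre^𝔅(y) ∧ η(x,y))` for actual `x`. -/
def GAEZig0 (𝔄 𝔅 : ActionModel A P) (η : 𝔄.E → 𝔅.E → Form A P) : Prop :=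
  ∀ x ∈ 𝔄.actual, ∀ (M : Kripke A P) (w : M.W), sat M w (𝔄.pre x) →
    ∃ y ∈ 𝔅.actual, sat M w (𝔅.pre y) ∧ sat M w (η x y)

/-- Zag0 of the generalized action emulation. -/
def GAEZag0 (𝔄 𝔅 : ActionModel A P) (η : 𝔄.E → 𝔅.E → Form A P) : Prop :=
  ∀ y ∈ 𝔅.actual, ∀ (M : Kripke A P) (w : M.W), sat M w (𝔅.pre y) →
    ∃ x ∈ 𝔄.actual, sat M w (𝔄.pre x) ∧ sat M w (η x y)

/-- `η` is a generalized action emulation witnessing `𝔄 ⇄_G 𝔅`. -/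
def IsGAE (𝔄 𝔅 : ActionModel A P) (η : 𝔄.E → 𝔅.E → Form A P) : Prop :=
  GAEZig 𝔄 𝔅 η ∧ GAEZag 𝔄 𝔅 η ∧ GAEZig0 𝔄 𝔅 η ∧ GAEZag0 𝔄 𝔅 η

/-- `S` is a propositional action emulation witnessing `𝔄 ⇄_P 𝔅`
(Consistency, Zig, Zag, Zig0, Zag0; disjunctions rendered semantically). -/
def IsPAEW (𝔄 𝔅 : ActionModel A P) (S : 𝔄.E → 𝔅.E → Prop) : Prop :=
  (∀ x y, S x y → satisfiable ((𝔄.pre x).and (𝔅.pre y))) ∧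
  (∀ (a : A) x y x', S x y → 𝔄.rel a x x' →
     ∀ (M : Kripke A P) (w : M.W), sat M w (𝔄.pre x') →
       ∃ y', 𝔅.rel a y y' ∧ S x' y' ∧ sat M w (𝔅.pre y')) ∧
  (∀ (a : A) x y y', S x y → 𝔅.rel a y y' →
     ∀ (M : Kripke A P) (w : M.W), sat M w (𝔅.pre y') →
       ∃ x', 𝔄.rel a x x' ∧ S x' y' ∧ sat M w (𝔄.pre x')) ∧
  (∀ x ∈ 𝔄.actual, ∀ (M : Kripke A P) (w : M.W), sat M w (𝔄.pre x) →
     ∃ y ∈ 𝔅.actual, S x y ∧ sat M w (𝔅.pre y)) ∧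
  (∀ y ∈ 𝔅.actual, ∀ (M : Kripke A P) (w : M.W), sat M w (𝔅.pre y) →
     ∃ x ∈ 𝔄.actual, S x y ∧ sat M w (𝔄.pre x))

/-- `S` is an action emulation witnessing `𝔄 ⇄ 𝔅`
(Consistency, Zig, Zag, Zig0, Zag0; disjunctions and boxes rendered semantically). -/
def IsAEW (𝔄 𝔅 : ActionModel A P) (S : 𝔄.E → 𝔅.E → Prop) : Prop :=
  (∀ x y, S x y → satisfiable ((𝔄.pre x).and (𝔅.pre y))) ∧
  (∀ (a : A) x y x', S x y → 𝔄.rel a x x' →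
     ∀ (M : Kripke A P) (w v : M.W), sat M w (𝔄.pre x) → sat M w (𝔅.pre y) →
       M.rel a w v → sat M v (𝔄.pre x') →
       ∃ y', 𝔅.rel a y y' ∧ S x' y' ∧ sat M v (𝔅.pre y')) ∧
  (∀ (a : A) x y y', S x y → 𝔅.rel a y y' →
     ∀ (M : Kripke A P) (w v : M.W), sat M w (𝔄.pre x) → sat M w (𝔅.pre y) →
       M.rel a w v → sat M v (𝔅.pre y') →
       ∃ x', 𝔄.rel a x x' ∧ S x' y' ∧ sat M v (𝔄.pre x')) ∧
  (∀ x ∈ 𝔄.actual, ∀ (M : Kripke A P) (w : M.W), sat M w (𝔄.pre x) →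
     ∃ y ∈ 𝔅.actual, S x y ∧ sat M w (𝔅.pre y)) ∧
  (∀ y ∈ 𝔅.actual, ∀ (M : Kripke A P) (w : M.W), sat M w (𝔅.pre y) →
     ∃ x ∈ 𝔄.actual, S x y ∧ sat M w (𝔄.pre x))

/-- `L₀`: formulas `α` such that if `α` is satisfiable and `α ⊨ □_a φ` then `φ` is valid. -/
def L0 : Set (Form A P) :=
  {α | satisfiable α → ∀ (a : A) (φ : Form A P), entails α (Form.box a φ) → valid φ}

/-- `Φ` is `Ψ`-regular. -/
def Regular (Φ Ψ : Set (Form A P)) : Prop :=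
  ∀ φ ∈ Φ, ∀ ψ ∈ Ψ, entails ψ φ ∨ entails ψ φ.neg

/-- `Φ` is `Ψ`-basis: every `φ ∈ Φ` is equivalent to a disjunction of a subset of `Ψ`
(disjunction rendered semantically). -/
def IsBasisFor (Φ Ψ : Set (Form A P)) : Prop :=
  ∀ φ ∈ Φ, ∃ Ψ' ⊆ Ψ, ∀ (M : Kripke A P) (w : M.W), sat M w φ ↔ ∃ ψ ∈ Ψ', sat M w ψ

/-- `Φ` is `Ψ`-discrete: if `φ ∈ Φ` entails a finite disjunction `⋁_l ⋀_a □_a ξ_l^a`, then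
`φ ⊨ ⋁_l ⋁ G(⋀_a □_a ξ_l^a, Ψ)` (outer disjunctions rendered semantically). -/
def Discrete [Fintype A] (Φ Ψ : Set (Form A P)) : Prop :=
  ∀ φ ∈ Φ, ∀ (L : ℕ) (ξ : Fin L → A → Form A P),
    entails φ (bigOr ((List.finRange L).map fun l => boxConj (ξ l))) →
    ∀ (M : Kripke A P) (w : M.W), sat M w φ →
      ∃ (l : Fin L), ∃ ψ ∈ Ψ, entails ψ (boxConj (ξ l)) ∧ sat M w ψ

/-- `Φ` is `Ψ`-known: if `φ ∈ Φ` and `φ ⊨ □_a ξ`, then `φ ⊨ □_a ⋁ G(ξ, Ψ)`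
(inner disjunction rendered semantically). -/
def Known (Φ Ψ : Set (Form A P)) : Prop :=
  ∀ φ ∈ Φ, ∀ (a : A) (χ : Form A P), entails φ (Form.box a χ) →
    ∀ (M : Kripke A P) (w v : M.W), sat M w φ → M.rel a w v →
      ∃ ψ ∈ Ψ, entails ψ χ ∧ sat M v ψ

/-- `R_a^𝔄(x)`. -/
def Rset (𝔄 : ActionModel A P) (a : A) (x : 𝔄.E) : Set 𝔄.E :=
  {y | satisfiable ((𝔄.pre x).and (Form.dia a (𝔄.pre y)))}

/-- `Q_a^𝔄(x)`. -/
def Qset (𝔄 : ActionModel A P) (a : A) (x : 𝔄.E) : Set 𝔄.E :=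
  {y | 𝔄.rel a x y ∧ satisfiable ((𝔄.pre x).and (Form.dia a (𝔄.pre y)))}

/-- Modal depth. -/
def depth : Form A P → ℕ
  | .top => 0
  | .atom _ => 0
  | .neg φ => depth φ
  | .or φ ψ => max (depth φ) (depth ψ)
  | .dia _ φ => depth φ + 1

/-- Subformulas. -/
def Subf : Form A P → List (Form A P)
  | .top => [.top]
  | .atom p => [.atom p]
  | .neg φ => .neg φ :: Subf φ
  | .or φ ψ => .or φ ψ :: (Subf φ ++ Subf ψ)
  | .dia a φ => .dia a φ :: Subf φ

/-- Single negation. -/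
def singleNeg : Form A P → Form A P
  | .neg φ => φ
  | φ => .neg φ

/-- Closure under subformulas and single negations. -/
def closureF (φ : Form A P) : Set (Form A P) :=
  {χ | χ ∈ Subf φ ∨ ∃ ψ ∈ Subf φ, χ = singleNeg ψ}

/-! The bisimulation between `M ⊗ 𝔄` and `M ⊗ 𝔅` relates `(w, x)` to `(w, y)` exactly when
`η(x, y)` holds at `w`. Zig and Zag of `η` are the forth and back clauses of this relation, and
Zig0 and Zag0 relate the actual worlds; Zag and Zag0 are Zig and Zig0 for the transposed map
`flip η`, so only the forth direction needs an argument. -/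

section Emulation

variable {𝔄 𝔅 : ActionModel A P} {η : 𝔄.E → 𝔅.E → Form A P}

theorem GAEZag.swap (h : GAEZag 𝔄 𝔅 η) : GAEZig 𝔅 𝔄 (flip η) :=
  fun a y x y' => h a x y y'

theorem GAEZag0.swap (h : GAEZag0 𝔄 𝔅 η) : GAEZig0 𝔅 𝔄 (flip η) := h

def emulationRel (M : Kripke A P) (η : 𝔄.E → 𝔅.E → Form A P)
    (p : (update M 𝔄).W) (q : (update M 𝔅).W) : Prop :=
  p.1.1 = q.1.1 ∧ sat M p.1.1 (η p.1.2 q.1.2)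

theorem emulationRel_flip {M : Kripke A P} {p : (update M 𝔄).W} {q : (update M 𝔅).W} :
    emulationRel M (flip η) q p ↔ emulationRel M η p q := by
  constructor <;> rintro ⟨hw, hη⟩ <;> exact ⟨hw.symm, hw ▸ hη⟩

theorem GAEZig.exists_emulationRel (hzig : GAEZig 𝔄 𝔅 η) {M : Kripke A P} {a : A}
    {p p' : (update M 𝔄).W} {q : (update M 𝔅).W} (hpq : emulationRel M η p q)
    (hpp' : (update M 𝔄).rel a p p') :
    ∃ q', (update M 𝔅).rel a q q' ∧ emulationRel M η p' q' := by
  obtain ⟨hw, hη⟩ := hpq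
  obtain ⟨hww', hxx'⟩ := hpp'
  obtain ⟨y', hyy', hy', hη'⟩ := hzig a _ _ _ hxx' M _ _ hη hww' p'.2
  exact ⟨⟨(p'.1.1, y'), hy'⟩, ⟨hw ▸ hww', hyy'⟩, rfl, hη'⟩

theorem GAEZig0.exists_actual_emulationRel (hzig0 : GAEZig0 𝔄 𝔅 η) {M : Kripke A P}
    {p : (update M 𝔄).W} (hp : p ∈ (update M 𝔄).actual) :
    ∃ q ∈ (update M 𝔅).actual, emulationRel M η p q := by
  obtain ⟨y, hy, hpre, hη⟩ := hzig0 _ hp.2 M _ p.2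
  exact ⟨⟨(p.1.1, y), hpre⟩, ⟨hp.1, hy⟩, rfl, hη⟩

theorem isBisim_emulationRel (hzig : GAEZig 𝔄 𝔅 η) (hzag : GAEZag 𝔄 𝔅 η) (M : Kripke A P) :
    IsBisim (update M 𝔄) (update M 𝔅) (emulationRel M η) := by
  intro p q hpq
  refine ⟨fun r => show M.val _ r ↔ M.val _ r from hpq.1 ▸ Iff.rfl,
    fun a p' hpp' => hzig.exists_emulationRel hpq hpp', fun a q' hqq' => ?_⟩
  obtain ⟨p', hpp', hp'q'⟩ := hzag.swap.exists_emulationRel (emulationRel_flip.2 hpq) hqq'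
  exact ⟨p', hpp', emulationRel_flip.1 hp'q'⟩

end Emulation

/-- a generalized action emulation implies action model equivalence. -/
theorem gae_implies_equiv (𝔄 𝔅 : ActionModel A P) (η : 𝔄.E → 𝔅.E → Form A P)
    (h : IsGAE 𝔄 𝔅 η) : AMEquiv 𝔄 𝔅 := by
  obtain ⟨hzig, hzag, hzig0, hzag0⟩ := h
  intro M
  refine ⟨emulationRel M η, isBisim_emulationRel hzig hzag M,
    fun p hp => hzig0.exists_actual_emulationRel hp, fun q hq => ?_⟩
  obtain ⟨p, hp, hqp⟩ := hzag0.swap.exists_actual_emulationRel hq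
  exact ⟨p, hp, emulationRel_flip.1 hqp⟩
end

section
/- If S is a propositional action emulation witnessing A ⇄_P B, then defining η(x,y) := ⊤ if S(x,y) and η(x,y) := ⊥ otherwise yields a generalized action emulation witnessing A ⇄_G B. Conversely, if some η with values in {⊥,⊤} is a generalized action emulation witnessing A ⇄_G B, then S := {(x,y) : η(x,y) = ⊤ and Pre^A(x) ∧ Pre^B(y) satisfiable} is a propositional action emulation witnessing A ⇄_P B. -/
variable {A P : Type}

open Classical

/-! A `{⊥, ⊤}`-valued `η(x,y)` says nothing about the world it is evaluated at, so the boxed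
conditions `η(x,y) ⊨ □_a(…)` of a generalized emulation are as strong as their unboxed forms:
any pointed model `(M, w)` becomes an `a`-successor of a fresh root world, at which `η(x,y) = ⊤`
holds. Reading `⊤` as "related" and `⊥` as "unrelated" then matches the two sets of clauses
one for one; the consistency clause is supplied by adding satisfiability to the relation. -/

section Formulas

variable {M : Kripke A P} {w : M.W}

@[simp] lemma sat_top : sat M w (Form.top : Form A P) := trivial

@[simp] lemma not_sat_bot : ¬ sat M w (Form.bot : Form A P) := by
  simp [Form.bot, sat]

@[simp] lemma sat_and {φ ψ : Form A P} : sat M w (φ.and ψ) ↔ sat M w φ ∧ sat M w ψ := by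
  simp [Form.and, sat]

lemma sat_ite_top_bot {p : Prop} [Decidable p] :
    sat M w (if p then Form.top else Form.bot : Form A P) ↔ p := by
  split_ifs with hp <;> simp [hp]

lemma eq_top_of_sat {φ : Form A P} (hφ : φ = Form.top ∨ φ = Form.bot) (h : sat M w φ) :
    φ = Form.top :=
  hφ.resolve_right fun hbot => not_sat_bot (hbot ▸ h)

end Formulas

namespace Kripke

def addRoot (M : Kripke A P) (a : A) (w : M.W) : Kripke A P where
  W := Option M.W
  val o p := match o with | some u => M.val u p | none => False
  rel b o₁ o₂ := match o₁, o₂ with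
    | some u, some v => M.rel b u v
    | none, some v => b = a ∧ v = w
    | _, none => False
  actual := ∅

lemma addRoot_rel_root (M : Kripke A P) (a : A) (w : M.W) :
    (M.addRoot a w).rel a none (some w) :=
  ⟨rfl, rfl⟩

@[simp] lemma sat_addRoot_some (M : Kripke A P) (a : A) (w : M.W) (φ : Form A P) (u : M.W) :
    sat (M.addRoot a w) (some u) φ ↔ sat M u φ := by
  induction φ generalizing u with
  | top | atom => simp [sat, addRoot]
  | neg φ ih => simp [sat, ih]
  | or φ ψ ihφ ihψ => simp [sat, ihφ, ihψ]
  | dia b φ ih =>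
    constructor
    · rintro ⟨v | v, hr, hs⟩
      · exact hr.elim
      · exact ⟨v, hr, (ih v).1 hs⟩
    · rintro ⟨v, hr, hs⟩
      exact ⟨some v, hr, (ih v).2 hs⟩

end Kripke

section Emulation

variable {𝔄 𝔅 : ActionModel A P}

lemma GAEZig.exists_of_eq_top {η : 𝔄.E → 𝔅.E → Form A P} (h : GAEZig 𝔄 𝔅 η) {a : A}
    {x x' : 𝔄.E} {y : 𝔅.E} (hxy : η x y = Form.top) (hxx' : 𝔄.rel a x x') {M : Kripke A P} {w : M.W}
    (hw : sat M w (𝔄.pre x')) :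
    ∃ y', 𝔅.rel a y y' ∧ sat M w (𝔅.pre y') ∧ sat M w (η x' y') := by
  obtain ⟨y', hyy', hy', hη⟩ := h a x y x' hxx' (M.addRoot a w) none (some w)
    (hxy ▸ sat_top) (M.addRoot_rel_root a w) ((M.sat_addRoot_some a w _ w).2 hw)
  exact ⟨y', hyy', (M.sat_addRoot_some a w _ w).1 hy', (M.sat_addRoot_some a w _ w).1 hη⟩

lemma GAEZag.exists_of_eq_top {η : 𝔄.E → 𝔅.E → Form A P} (h : GAEZag 𝔄 𝔅 η) {a : A}
    {x : 𝔄.E} {y y' : 𝔅.E} (hxy : η x y = Form.top) (hyy' : 𝔅.rel a y y') {M : Kripke A P} {w : M.W}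
    (hw : sat M w (𝔅.pre y')) :
    ∃ x', 𝔄.rel a x x' ∧ sat M w (𝔄.pre x') ∧ sat M w (η x' y') := by
  obtain ⟨x', hxx', hx', hη⟩ := h a x y y' hyy' (M.addRoot a w) none (some w)
    (hxy ▸ sat_top) (M.addRoot_rel_root a w) ((M.sat_addRoot_some a w _ w).2 hw)
  exact ⟨x', hxx', (M.sat_addRoot_some a w _ w).1 hx', (M.sat_addRoot_some a w _ w).1 hη⟩

lemma IsPAEW.isGAE_ite {S : 𝔄.E → 𝔅.E → Prop} (h : IsPAEW 𝔄 𝔅 S) :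
    IsGAE 𝔄 𝔅 (fun x y => if S x y then Form.top else Form.bot) := by
  obtain ⟨-, hzig, hzag, hzig0, hzag0⟩ := h
  refine ⟨?_, ?_, ?_, ?_⟩
  · intro a x y x' hxx' M w v hxy _ hv
    obtain ⟨y', hyy', hS, hy'⟩ := hzig a x y x' (sat_ite_top_bot.1 hxy) hxx' M v hv
    exact ⟨y', hyy', hy', sat_ite_top_bot.2 hS⟩
  · intro a x y y' hyy' M w v hxy _ hv
    obtain ⟨x', hxx', hS, hx'⟩ := hzag a x y y' (sat_ite_top_bot.1 hxy) hyy' M v hv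
    exact ⟨x', hxx', hx', sat_ite_top_bot.2 hS⟩
  · intro x hx M w hw
    obtain ⟨y, hy, hS, hwy⟩ := hzig0 x hx M w hw
    exact ⟨y, hy, hwy, sat_ite_top_bot.2 hS⟩
  · intro y hy M w hw
    obtain ⟨x, hx, hS, hwx⟩ := hzag0 y hy M w hw
    exact ⟨x, hx, hwx, sat_ite_top_bot.2 hS⟩

lemma IsGAE.isPAEW_of_top_bot {η : 𝔄.E → 𝔅.E → Form A P}
    (hη : ∀ x y, η x y = Form.top ∨ η x y = Form.bot) (h : IsGAE 𝔄 𝔅 η) :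
    IsPAEW 𝔄 𝔅 (fun x y => η x y = Form.top ∧ satisfiable ((𝔄.pre x).and (𝔅.pre y))) := by
  obtain ⟨hzig, hzag, hzig0, hzag0⟩ := h
  have related {x y} {M : Kripke A P} {w : M.W} (hx : sat M w (𝔄.pre x))
      (hy : sat M w (𝔅.pre y)) (hxy : sat M w (η x y)) :
      η x y = Form.top ∧ satisfiable ((𝔄.pre x).and (𝔅.pre y)) :=
    ⟨eq_top_of_sat (hη x y) hxy, M, w, sat_and.2 ⟨hx, hy⟩⟩
  refine ⟨fun x y hS => hS.2, ?_, ?_, ?_, ?_⟩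
  · intro a x y x' hS hxx' M w hw
    obtain ⟨y', hyy', hy', hη'⟩ := hzig.exists_of_eq_top hS.1 hxx' hw
    exact ⟨y', hyy', related hw hy' hη', hy'⟩
  · intro a x y y' hS hyy' M w hw
    obtain ⟨x', hxx', hx', hη'⟩ := hzag.exists_of_eq_top hS.1 hyy' hw
    exact ⟨x', hxx', related hx' hw hη', hx'⟩
  · intro x hx M w hw
    obtain ⟨y, hy, hwy, hη'⟩ := hzig0 x hx M w hw
    exact ⟨y, hy, related hw hwy hη', hwy⟩
  · intro y hy M w hw
    obtain ⟨x, hx, hwx, hη'⟩ := hzag0 y hy M w hw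
    exact ⟨x, hx, related hwx hw hη', hwx⟩

end Emulation

/-- propositional action emulation corresponds exactly to generalized action
emulations taking values in `{⊥, ⊤}`. -/
theorem pae_iff_gae_top_bot (𝔄 𝔅 : ActionModel A P) :
    (∀ S : 𝔄.E → 𝔅.E → Prop, IsPAEW 𝔄 𝔅 S →
       IsGAE 𝔄 𝔅 (fun x y => if S x y then Form.top else Form.bot)) ∧
    (∀ η : 𝔄.E → 𝔅.E → Form A P,
       (∀ x y, η x y = Form.top ∨ η x y = Form.bot) → IsGAE 𝔄 𝔅 η →
       IsPAEW 𝔄 𝔅 (fun x y => η x y = Form.top ∧ satisfiable ((𝔄.pre x).and (𝔅.pre y)))) :=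
  ⟨fun _ hS => hS.isGAE_ite, fun _ hη hG => hG.isPAEW_of_top_bot hη⟩
end

section
/- In the counterexample action model pair: there is no action emulation S witnessing A ⇄ B, because any such S cannot contain (x₁,y₁) or (x₁,y₃) (the Zig condition fails), and then the Zig0 condition fails at x₁ since □_a p₁ ∨ □_a p₂ does not entail p₁ ∨ p₂. -/
variable {A P : Type}

/-- `p₁`. -/
def p1 : Form Unit (Fin 2) := Form.atom 0
/-- `p₂`. -/
def p2 : Form Unit (Fin 2) := Form.atom 1
/-- `□_a p₁ ∨ □_a p₂`. -/
def boxOr : Form Unit (Fin 2) := (Form.box () p1).or (Form.box () p2)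

/-- The action model `A` of the counterexample: events `x₁,x₂,x₃,x₄` (as `0,1,2,3`),
actual events `x₁,x₃`, relations `x₁ →_a x₂`, `x₃ →_a x₄`. -/
def cexA : ActionModel Unit (Fin 2) where
  E := Fin 4
  pre := ![boxOr, Form.top, boxOr, p1.and p2]
  rel := fun _ x y => (x = 0 ∧ y = 1) ∨ (x = 2 ∧ y = 3)
  actual := {0, 2}

/-- The action model `B` of the counterexample: events `y₁,y₂,y₃,y₄` (as `0,1,2,3`),
actual events `y₁,y₃`, relations `y₁ →_a y₂`, `y₃ →_a y₄`. -/
def cexB : ActionModel Unit (Fin 2) where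
  E := Fin 4
  pre := ![boxOr, p1, boxOr, p2]
  rel := fun _ x y => (x = 0 ∧ y = 1) ∨ (x = 2 ∧ y = 3)
  actual := {0, 2}


/-- One-world Kripke model with no relations and all atoms false. -/
def M0cex : Kripke Unit (Fin 2) := ⟨Unit, fun _ _ => False, fun _ _ _ => False, ∅⟩

lemma sat_M0cex_boxOr : sat M0cex () boxOr := by
  left
  simp only [sat, Form.box, boxOr]
  rintro ⟨v, hv, -⟩
  exact hv

/-- Two-world model: w=0 → v=1, v satisfies exactly atom `q`. -/
def Mq (q : Fin 2) : Kripke Unit (Fin 2) :=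
  ⟨Fin 2, fun w p => w = 1 ∧ p = q, fun _ w v => w = 0 ∧ v = 1, ∅⟩

lemma sat_Mq_boxOr (q : Fin 2) : sat (Mq q) ((0 : Fin 2) : (Mq q).W) boxOr := by
  have hbox : sat (Mq q) ((0 : Fin 2) : (Mq q).W) (Form.box () (Form.atom q)) := by
    simp only [sat, Form.box]
    rintro ⟨v, ⟨-, rfl⟩, hv⟩
    exact hv ⟨rfl, rfl⟩
  fin_cases q
  · exact Or.inl hbox
  · exact Or.inr hbox

lemma Mq_rel (q : Fin 2) : (Mq q).rel () ((0 : Fin 2) : (Mq q).W) ((1 : Fin 2) : (Mq q).W) :=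
  ⟨rfl, rfl⟩

/-- in the counterexample there is no action emulation witnessing `A ⇄ B`:
any such `S` cannot contain `(x₁,y₁)` or `(x₁,y₃)` (Zig fails), then Zig0 fails at `x₁`
since `□_a p₁ ∨ □_a p₂ ⊭ p₁ ∨ p₂`. -/
theorem no_action_emulation_cex :
    (∀ S : cexA.E → cexB.E → Prop, IsAEW cexA cexB S →
       ¬ S ((0 : Fin 4) : cexA.E) ((0 : Fin 4) : cexB.E) ∧
       ¬ S ((0 : Fin 4) : cexA.E) ((2 : Fin 4) : cexB.E)) ∧
    ¬ entails boxOr (p1.or p2) ∧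
    ¬ ∃ S : cexA.E → cexB.E → Prop, IsAEW cexA cexB S := by
  have hmain : ∀ S : cexA.E → cexB.E → Prop, IsAEW cexA cexB S →
       ¬ S ((0 : Fin 4) : cexA.E) ((0 : Fin 4) : cexB.E) ∧
       ¬ S ((0 : Fin 4) : cexA.E) ((2 : Fin 4) : cexB.E) := by
    intro S hS
    obtain ⟨hcons, hzig, hzag, hzig0, hzag0⟩ := hS
    have hArel : cexA.rel () ((0 : Fin 4) : cexA.E) ((1 : Fin 4) : cexA.E) :=
      Or.inl ⟨rfl, rfl⟩
    constructor
    · intro h00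
      have hpre0 : sat (Mq 1) ((0 : Fin 2) : (Mq 1).W) (cexA.pre ((0 : Fin 4) : cexA.E)) := by
        simpa [cexA] using sat_Mq_boxOr 1
      have hpreB0 : sat (Mq 1) ((0 : Fin 2) : (Mq 1).W) (cexB.pre ((0 : Fin 4) : cexB.E)) := by
        simpa [cexB] using sat_Mq_boxOr 1
      have hpre1 : sat (Mq 1) ((1 : Fin 2) : (Mq 1).W) (cexA.pre ((1 : Fin 4) : cexA.E)) := by
        simp [cexA, sat]
      obtain ⟨y', hy', -, hsaty'⟩ :=
        hzig () _ _ _ h00 hArel (Mq 1) _ _ hpre0 hpreB0 (Mq_rel 1) hpre1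
      have hy1 : y' = ((1 : Fin 4) : cexB.E) := by
        rcases hy' with ⟨-, h⟩ | ⟨h, -⟩
        · exact h
        · exact absurd h (by decide)
      subst hy1
      have hfin : sat (Mq 1) ((1 : Fin 2) : (Mq 1).W) p1 := by simpa [cexB] using hsaty'
      simp only [sat, p1, Mq] at hfin
      exact absurd hfin.2 (by decide)
    · intro h02
      have hpre0 : sat (Mq 0) ((0 : Fin 2) : (Mq 0).W) (cexA.pre ((0 : Fin 4) : cexA.E)) := by
        simpa [cexA] using sat_Mq_boxOr 0
      have hpreB2 : sat (Mq 0) ((0 : Fin 2) : (Mq 0).W) (cexB.pre ((2 : Fin 4) : cexB.E)) := by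
        simpa [cexB] using sat_Mq_boxOr 0
      have hpre1 : sat (Mq 0) ((1 : Fin 2) : (Mq 0).W) (cexA.pre ((1 : Fin 4) : cexA.E)) := by
        simp [cexA, sat]
      obtain ⟨y', hy', -, hsaty'⟩ :=
        hzig () _ _ _ h02 hArel (Mq 0) _ _ hpre0 hpreB2 (Mq_rel 0) hpre1
      have hy3 : y' = ((3 : Fin 4) : cexB.E) := by
        rcases hy' with ⟨h, -⟩ | ⟨-, h⟩
        · exact absurd h (by decide)
        · exact h
      subst hy3
      have hfin : sat (Mq 0) ((1 : Fin 2) : (Mq 0).W) p2 := by simpa [cexB] using hsaty'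
      simp only [sat, p2, Mq] at hfin
      exact absurd hfin.2 (by decide)
  refine ⟨hmain, ?_, ?_⟩
  · intro h
    have := h M0cex () sat_M0cex_boxOr
    simp [sat, p1, p2, M0cex] at this
  · rintro ⟨S, hS⟩
    obtain ⟨h1, h2⟩ := hmain S hS
    obtain ⟨hcons, hzig, hzag, hzig0, hzag0⟩ := hS
    have h0A : ((0 : Fin 4) : cexA.E) ∈ cexA.actual := by left; rfl
    have hsat : sat M0cex () (cexA.pre ((0 : Fin 4) : cexA.E)) := by
      simpa [cexA] using sat_M0cex_boxOr
    obtain ⟨y, hy, hSy, -⟩ := hzig0 _ h0A M0cex () hsat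
    have hy02 : y = ((0 : Fin 4) : cexB.E) ∨ y = ((2 : Fin 4) : cexB.E) := by
      exact hy
    rcases hy02 with rfl | rfl
    · exact h1 hSy
    · exact h2 hSy
end

section
/- If action models A and B admit a generalized action emulation, then they admit one of the specific form η(x,y) = ⋀_{a∈A} □_a ξ_{x,y}^a for suitable formulas ξ_{x,y}^a. Concretely, given a generalized action emulation η', setting ξ_{x,y}^a := ⋀_{x→_a x'}(Pre^A(x') → ⋁_{y→_a y'}(Pre^B(y') ∧ η'(x',y'))) ∧ ⋀_{y→_a y'}(Pre^B(y') → ⋁_{x→_a x'}(Pre^A(x') ∧ η'(x',y'))) makes η(x,y) := ⋀_a □_a ξ_{x,y}^a a generalized action emulation. -/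
variable {A P : Type}

open Classical

/-- The formula `ξ_{x,y}^a` built from a generalized action emulation `η'`:
`⋀_{x →_a x'}(Pre^𝔄(x') → ⋁_{y →_a y'}(Pre^𝔅(y') ∧ η'(x',y'))) ∧
 ⋀_{y →_a y'}(Pre^𝔅(y') → ⋁_{x →_a x'}(Pre^𝔄(x') ∧ η'(x',y')))`. -/
noncomputable def xiDef (𝔄 𝔅 : ActionModel A P) [Fintype 𝔄.E] [Fintype 𝔅.E]
    (η' : 𝔄.E → 𝔅.E → Form A P) (x : 𝔄.E) (y : 𝔅.E) (a : A) : Form A P :=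
  (bigAnd (((Finset.univ.filter (fun x' => 𝔄.rel a x x')).toList).map (fun x' =>
      (𝔄.pre x').imp (bigOr (((Finset.univ.filter (fun y' => 𝔅.rel a y y')).toList).map
        (fun y' => (𝔅.pre y').and (η' x' y'))))))).and
  (bigAnd (((Finset.univ.filter (fun y' => 𝔅.rel a y y')).toList).map (fun y' =>
      (𝔅.pre y').imp (bigOr (((Finset.univ.filter (fun x' => 𝔄.rel a x x')).toList).map
        (fun x' => (𝔄.pre x').and (η' x' y')))))))

section Semantics

variable {M : Kripke A P} {w : M.W}

@[simp]
lemma sat_imp {φ ψ : Form A P} : sat M w (φ.imp ψ) ↔ (sat M w φ → sat M w ψ) := by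
  simp only [Form.imp, sat, imp_iff_not_or]

@[simp]
lemma sat_box {a : A} {φ : Form A P} :
    sat M w (Form.box a φ) ↔ ∀ v, M.rel a w v → sat M v φ := by
  simp [Form.box, sat]

@[simp]
lemma sat_bigAnd {l : List (Form A P)} : sat M w (bigAnd l) ↔ ∀ φ ∈ l, sat M w φ := by
  induction l with
  | nil => simp [bigAnd, sat]
  | cons φ l ih => simp [bigAnd, ih]

@[simp]
lemma sat_bigOr {l : List (Form A P)} : sat M w (bigOr l) ↔ ∃ φ ∈ l, sat M w φ := by
  induction l with
  | nil => simp [bigOr, Form.bot, sat]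
  | cons φ l ih => simp [bigOr, sat, ih]

lemma sat_boxConj [Fintype A] {ξ : A → Form A P} :
    sat M w (boxConj ξ) ↔ ∀ a v, M.rel a w v → sat M v (ξ a) := by
  simp [boxConj]

lemma sat_xiDef (𝔄 𝔅 : ActionModel A P) [Fintype 𝔄.E] [Fintype 𝔅.E]
    (η' : 𝔄.E → 𝔅.E → Form A P) (x : 𝔄.E) (y : 𝔅.E) (a : A) :
    sat M w (xiDef 𝔄 𝔅 η' x y a) ↔
      (∀ x', 𝔄.rel a x x' → sat M w (𝔄.pre x') →
          ∃ y', 𝔅.rel a y y' ∧ sat M w (𝔅.pre y') ∧ sat M w (η' x' y')) ∧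
      (∀ y', 𝔅.rel a y y' → sat M w (𝔅.pre y') →
          ∃ x', 𝔄.rel a x x' ∧ sat M w (𝔄.pre x') ∧ sat M w (η' x' y')) := by
  simp [xiDef]

end Semantics

/-! The Zig and Zag clauses of `η'` say exactly that `η'(x,y)` entails `⋀_a □_a ξ^a_{x,y}`.
So the box form inherits Zig0/Zag0 from `η'`, and for Zig/Zag the conjuncts `ξ^a_{x,y}` at an
`a`-successor supply an `η'`-related pair of events, which then satisfies the box form again. -/

section Emulation

variable {𝔄 𝔅 : ActionModel A P}

lemma GAEZig0.mono {η η' : 𝔄.E → 𝔅.E → Form A P} (h : GAEZig0 𝔄 𝔅 η')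
    (hη : ∀ x y, entails (η' x y) (η x y)) : GAEZig0 𝔄 𝔅 η := fun x hx M w hw =>
  let ⟨y, hy, hpre, hw'⟩ := h x hx M w hw
  ⟨y, hy, hpre, hη x y M w hw'⟩

lemma GAEZag0.mono {η η' : 𝔄.E → 𝔅.E → Form A P} (h : GAEZag0 𝔄 𝔅 η')
    (hη : ∀ x y, entails (η' x y) (η x y)) : GAEZag0 𝔄 𝔅 η := fun y hy M w hw =>
  let ⟨x, hx, hpre, hw'⟩ := h y hy M w hw
  ⟨x, hx, hpre, hη x y M w hw'⟩

variable [Fintype A] [Fintype 𝔄.E] [Fintype 𝔅.E] {η' : 𝔄.E → 𝔅.E → Form A P}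

lemma entails_boxConj_xiDef (hzig : GAEZig 𝔄 𝔅 η') (hzag : GAEZag 𝔄 𝔅 η')
    (x : 𝔄.E) (y : 𝔅.E) :
    entails (η' x y) (boxConj fun a => xiDef 𝔄 𝔅 η' x y a) := fun M w hw =>
  sat_boxConj.2 fun a v hv => (sat_xiDef 𝔄 𝔅 η' x y a).2
    ⟨fun x' hx' hpre => hzig a x y x' hx' M w v hw hv hpre,
      fun y' hy' hpre => hzag a x y y' hy' M w v hw hv hpre⟩

end Emulation

/-- if `𝔄` and `𝔅` admit a generalized action emulation `η'`, then
`η(x,y) := ⋀_{a ∈ A} □_a ξ_{x,y}^a` (with `ξ` the concrete formulas above) is again a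
generalized action emulation. -/
theorem gae_box_form [Fintype A] (𝔄 𝔅 : ActionModel A P) [Fintype 𝔄.E] [Fintype 𝔅.E]
    (η' : 𝔄.E → 𝔅.E → Form A P) (h : IsGAE 𝔄 𝔅 η') :
    IsGAE 𝔄 𝔅 (fun x y => boxConj (fun a => xiDef 𝔄 𝔅 η' x y a)) := by
  obtain ⟨hzig, hzag, hzig0, hzag0⟩ := h
  have lift := entails_boxConj_xiDef hzig hzag
  refine ⟨?zig, ?zag, hzig0.mono lift, hzag0.mono lift⟩
  case zig =>
    intro a x y x' hx' M w v hw hv hpre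
    obtain ⟨y', hy', hpre', hη'⟩ :=
      ((sat_xiDef 𝔄 𝔅 η' x y a).1 (sat_boxConj.1 hw a v hv)).1 x' hx' hpre
    exact ⟨y', hy', hpre', lift x' y' M v hη'⟩
  case zag =>
    intro a x y y' hy' M w v hw hv hpre
    obtain ⟨x', hx', hpre', hη'⟩ :=
      ((sat_xiDef 𝔄 𝔅 η' x y a).1 (sat_boxConj.1 hw a v hv)).2 y' hy' hpre
    exact ⟨x', hx', hpre', lift x' y' M v hη'⟩
end
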